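/- Let H be a Hilbert space, f = f₁ + f₂ with f₁ = α·1 a multiple of a fixed unit vector, f₂ ⊥ f₁, ‖f‖ = 1, α² + γ² = 1 with γ = ‖f₂‖. Let V ∈ L^∞(T^d), V ≤ 0 with ‖V‖_{L¹} = c₁ > 0, and let P satisfy (Pf, f) ≤ 0 for all f. If γ < 2c₁/(c₁ + 8‖V‖_{L²}) and γ ≤ 1/4, then ((P + m_V) f, f) ≤ −c₁/2, where m_V is multiplication by V and 1 denotes the constant function one on T^d. -/

import Mathlib

open MeasureTheory RealInnerProductSpace

noncomputable section

abbrev Torus (d : ℕ) := Fin d → AddCircle (1 : ℝ)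

abbrev L2R (d : ℕ) := Lp ℝ 2 (volume : Measure (Torus d))

/-! Writing `f = α • 1 + f₂`, the quadratic form of the multiplication operator `M = m_V` is
`α² ∫ V + 2α ⟪M 1, f₂⟫ + ⟪M f₂, f₂⟫`, since `M` is symmetric. The last term is `≤ 0` because
`V ≤ 0`, the middle one is at most `2 ‖V‖_{L²} γ` by Cauchy–Schwarz since `M 1 = V`, and
`α² ∫ V = -(1 - γ²) c₁`. The hypotheses on `γ` make the sum at most `-c₁ / 2`. -/

section InnerProductSpace

variable {H : Type*} [NormedAddCommGroup H] [InnerProductSpace ℝ H]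

theorem inner_map_smul_add_self_le {T : H →L[ℝ] H} (hT : (T : H →ₗ[ℝ] H).IsSymmetric)
    (e g : H) (hg : ⟪T g, g⟫ ≤ 0) {a : ℝ} (ha : |a| ≤ 1) :
    ⟪T (a • e + g), a • e + g⟫ ≤ a ^ 2 * ⟪T e, e⟫ + 2 * (‖T e‖ * ‖g‖) := by
  have hsymm : ⟪T g, e⟫ = ⟪T e, g⟫ := by
    rw [← ContinuousLinearMap.coe_coe, hT, real_inner_comm]
  have hexpand : ⟪T (a • e + g), a • e + g⟫ = a ^ 2 * ⟪T e, e⟫ + 2 * a * ⟪T e, g⟫ + ⟪T g, g⟫ := by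
    simp only [map_add, map_smul, inner_add_left, inner_add_right, real_inner_smul_left,
      real_inner_smul_right, hsymm]
    ring
  have hcross : a * ⟪T e, g⟫ ≤ ‖T e‖ * ‖g‖ :=
    calc a * ⟪T e, g⟫ ≤ |a * ⟪T e, g⟫| := le_abs_self _
      _ = |a| * |⟪T e, g⟫| := abs_mul _ _
      _ ≤ 1 * (‖T e‖ * ‖g‖) := by
        gcongr; exact abs_real_inner_le_norm _ _
      _ = ‖T e‖ * ‖g‖ := one_mul _
  rw [hexpand]
  linarith

end InnerProductSpace

section MultiplicationOperator

variable {X : Type*} [MeasurableSpace X] {μ : Measure X} {V : X → ℝ}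
  {M : Lp ℝ 2 μ →L[ℝ] Lp ℝ 2 μ} (hM : ∀ u : Lp ℝ 2 μ, (M u : X → ℝ) =ᵐ[μ] fun x => V x * u x)
include hM

theorem inner_apply_eq_integral_of_ae_eq_mul (u w : Lp ℝ 2 μ) :
    ⟪M u, w⟫ = ∫ x, V x * u x * w x ∂μ := by
  rw [L2.inner_def]
  refine integral_congr_ae ?_
  filter_upwards [hM u] with x hx
  simp [hx, mul_comm]

theorem isSymmetric_of_ae_eq_mul : (M : Lp ℝ 2 μ →ₗ[ℝ] Lp ℝ 2 μ).IsSymmetric := by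
  intro u w
  rw [ContinuousLinearMap.coe_coe, real_inner_comm (M w) u,
    inner_apply_eq_integral_of_ae_eq_mul hM, inner_apply_eq_integral_of_ae_eq_mul hM]
  simp only [mul_right_comm]

theorem inner_apply_self_nonpos_of_ae_eq_mul (hV : ∀ᵐ x ∂μ, V x ≤ 0) (u : Lp ℝ 2 μ) :
    ⟪M u, u⟫ ≤ 0 := by
  rw [inner_apply_eq_integral_of_ae_eq_mul hM]
  refine integral_nonpos_of_ae ?_
  filter_upwards [hV] with x hx
  rw [mul_assoc]
  exact mul_nonpos_of_nonpos_of_nonneg hx (mul_self_nonneg _)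

variable {one : Lp ℝ 2 μ} (hone : (one : X → ℝ) =ᵐ[μ] fun _ => 1)
include hone

theorem inner_apply_one_one_of_ae_eq_mul : ⟪M one, one⟫ = ∫ x, V x ∂μ := by
  rw [inner_apply_eq_integral_of_ae_eq_mul hM]
  refine integral_congr_ae ?_
  filter_upwards [hone] with x hx
  simp [hx]

theorem norm_apply_one_of_ae_eq_mul : ‖M one‖ = (eLpNorm V 2 μ).toReal := by
  rw [Lp.norm_def]
  congr 1
  refine eLpNorm_congr_ae ?_
  filter_upwards [hM one, hone] with x h1 h2
  simp [h1, h2]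

end MultiplicationOperator

theorem small_orthogonal_component_estimate_general (d : ℕ)
    (V : Torus d → ℝ)
    (hV_nonpos : ∀ x, V x ≤ 0)
    (c₁ : ℝ) (hc₁_def : c₁ = ∫ x, |V x|) (hc₁_pos : 0 < c₁)
    (P MV : L2R d →L[ℝ] L2R d)
    (hP : ∀ f : L2R d, ⟪P f, f⟫ ≤ 0)
    (hMV : ∀ u : L2R d, (MV u : Torus d → ℝ) =ᵐ[volume] fun x => V x * u x)
    (one : L2R d) (hone : (one : Torus d → ℝ) =ᵐ[volume] fun _ => 1)
    (f f₁ f₂ : L2R d) (α γ : ℝ)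
    (hsplit : f = f₁ + f₂)
    (hf₁ : f₁ = α • one)
    (hγ : γ = ‖f₂‖)
    (hαγ : α ^ 2 + γ ^ 2 = 1)
    (hγ_small : γ < 2 * c₁ / (c₁ + 8 * (eLpNorm V 2 (volume : Measure (Torus d))).toReal))
    (hγ_quarter : γ ≤ 1 / 4) :
    ⟪(P + MV) f, f⟫ ≤ -c₁ / 2 := by
  set C := (eLpNorm V 2 (volume : Measure (Torus d))).toReal
  have hintV : ∫ x, V x = -c₁ := by
    rw [hc₁_def, ← integral_neg]
    congr 1 with x
    rw [abs_of_nonpos (hV_nonpos x), neg_neg]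
  have hγ_nonneg : 0 ≤ γ := hγ ▸ norm_nonneg _
  have hα : |α| ≤ 1 := (sq_le_one_iff_abs_le_one α).mp (by nlinarith)
  have hMVf : ⟪MV f, f⟫ ≤ α ^ 2 * (-c₁) + 2 * (C * γ) := by
    have h := inner_map_smul_add_self_le (isSymmetric_of_ae_eq_mul hMV) one f₂
      (inner_apply_self_nonpos_of_ae_eq_mul hMV (ae_of_all _ hV_nonpos) f₂) hα
    rwa [inner_apply_one_one_of_ae_eq_mul hMV hone, norm_apply_one_of_ae_eq_mul hMV hone, hintV,
      ← hγ, ← hf₁, ← hsplit] at h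
  have hkey : γ * (c₁ + 8 * C) < 2 * c₁ := by
    rwa [lt_div_iff₀ (by positivity)] at hγ_small
  have hγ_sq : γ ^ 2 * c₁ ≤ γ * c₁ / 4 := by nlinarith [mul_nonneg hγ_nonneg hc₁_pos.le]
  rw [add_apply, inner_add_left]
  nlinarith [hP f]

/-- Quadratic-form estimate for `f = α·1 + f₂` with small orthogonal component:
if `γ = ‖f₂‖ < 2c₁/(c₁ + 8‖V‖_{L²})` and `γ ≤ 1/4`, then `((P + m_V)f, f) ≤ −c₁/2`. -/
theorem small_orthogonal_component_estimate (d : ℕ)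
    (V : Torus d → ℝ) (hV_meas : Measurable V)
    (CV : ℝ) (hV_bd : ∀ x, |V x| ≤ CV)
    (hV_nonpos : ∀ x, V x ≤ 0)
    (c₁ : ℝ) (hc₁_def : c₁ = ∫ x, |V x|) (hc₁_pos : 0 < c₁)
    (P MV : L2R d →L[ℝ] L2R d)
    (hP : ∀ f : L2R d, ⟪P f, f⟫ ≤ 0)
    (hMV : ∀ u : L2R d, (MV u : Torus d → ℝ) =ᵐ[volume] fun x => V x * u x)
    (one : L2R d) (hone : (one : Torus d → ℝ) =ᵐ[volume] fun _ => 1)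
    (f f₁ f₂ : L2R d) (α γ : ℝ)
    (hsplit : f = f₁ + f₂)
    (hf₁ : f₁ = α • one)
    (hperp : ⟪f₂, one⟫ = 0)
    (hfnorm : ‖f‖ = 1)
    (hγ : γ = ‖f₂‖)
    (hαγ : α ^ 2 + γ ^ 2 = 1)
    (hγ_small : γ < 2 * c₁ / (c₁ + 8 * (eLpNorm V 2 (volume : Measure (Torus d))).toReal))
    (hγ_quarter : γ ≤ 1 / 4) :
    ⟪(P + MV) f, f⟫ ≤ -c₁ / 2 :=
  small_orthogonal_component_estimate_general d V hV_nonpos c₁ hc₁_def hc₁_pos P MV hP hMV one hone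
    f f₁ f₂ α γ hsplit hf₁ hγ hαγ hγ_small hγ_quarter
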